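/- arXiv:1905.03657 — 2 statements merged into one kernel-verified Lean document; each statement's English description precedes it below -/
import Mathlib

section
/- Let Y_1, ..., Y_{n+1} be exchangeable real-valued random variables with continuous joint distribution (so ties have probability zero). Define the rank statistic π = (n+1)^{-1} Σ_{j=1}^{n+1} 1{Y_j ≤ Y_{n+1}}. Then for any α ∈ (0,1), P(π ≥ ⌊(n+1)α⌋/(n+1)) ≥ 1 - α. -/
/-!
Count, for a fixed outcome, the indices whose rank is below `k`: the largest value among them
dominates all of them, so there are at most `k` such indices, whatever the ties. Exchangeability
makes every index equally likely to be among them, so each has probability at most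
`k / (n + 1) ≤ α`; for the last index this is the complement of the event in question.
-/

open MeasureTheory Finset
open scoped ENNReal

open Classical in
theorem sum_measure_le_of_forall_card_le {ι Ω : Type*} [MeasurableSpace Ω] {μ : Measure Ω}
    {s : Finset ι} {A : ι → Set Ω} (hA : ∀ i ∈ s, MeasurableSet (A i)) {k : ℕ}
    (hk : ∀ ω, #{i ∈ s | ω ∈ A i} ≤ k) :
    ∑ i ∈ s, μ (A i) ≤ k * μ Set.univ := by
  calc ∑ i ∈ s, μ (A i) = ∫⁻ ω, ∑ i ∈ s, (A i).indicator 1 ω ∂μ := by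
        rw [lintegral_finsetSum _ fun i hi => measurable_one.indicator (hA i hi)]
        exact sum_congr rfl fun i hi => (lintegral_indicator_one (hA i hi)).symm
    _ ≤ ∫⁻ _, (k : ℝ≥0∞) ∂μ := lintegral_mono fun ω => by
        simp only [Set.indicator_apply, Pi.one_apply, sum_boole]
        exact_mod_cast hk ω
    _ = k * μ Set.univ := lintegral_const _

section Rank

variable {ι α : Type*} [Fintype ι] [LinearOrder α]

def rank (v : ι → α) (i : ι) : ℕ := #{j | v j ≤ v i}

theorem rank_comp_perm (v : ι → α) (e : Equiv.Perm ι) (i : ι) :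
    rank (v ∘ e) i = rank v (e i) := by
  simp only [rank, card_filter]
  exact Equiv.sum_comp e fun j => if v j ≤ v (e i) then 1 else 0

theorem card_filter_rank_lt_le (v : ι → α) (k : ℕ) : #{i | rank v i < k} ≤ k := by
  obtain hS | hS := (univ.filter fun i => rank v i < k).eq_empty_or_nonempty
  · simp [hS]
  obtain ⟨i, hi, hmax⟩ := exists_max_image _ v hS
  calc #{i | rank v i < k} ≤ rank v i :=
        card_le_card fun j hj => mem_filter.2 ⟨mem_univ j, hmax j hj⟩
    _ ≤ k := (mem_filter.1 hi).2.le

variable [TopologicalSpace α] [OrderClosedTopology α] [SecondCountableTopology α]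
  [MeasurableSpace α] [OpensMeasurableSpace α]

theorem measurable_rank (i : ι) : Measurable fun v : ι → α => rank v i := by
  simp only [rank, card_filter]
  exact Finset.measurable_sum _ fun j _ => Measurable.ite
    (measurableSet_le (measurable_pi_apply j) (measurable_pi_apply i)) measurable_const
    measurable_const

variable {Ω : Type*} [MeasurableSpace Ω]

def Exchangeable (μ : Measure Ω) (X : ι → Ω → α) : Prop :=
  ∀ e : Equiv.Perm ι, μ.map (fun ω i => X (e i) ω) = μ.map (fun ω i => X i ω)

theorem Exchangeable.measure_rank_lt_eq {μ : Measure Ω} {X : ι → Ω → α}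
    (hX : ∀ i, Measurable (X i)) (hexch : Exchangeable μ X) (i i₀ : ι) (k : ℕ) :
    μ {ω | rank (fun j => X j ω) i < k} = μ {ω | rank (fun j => X j ω) i₀ < k} := by
  classical
  have hB : MeasurableSet {v : ι → α | rank v i₀ < k} := measurable_rank i₀ measurableSet_Iio
  have hperm : {ω | rank (fun j => X j ω) i < k} =
      (fun ω j => X (Equiv.swap i₀ i j) ω) ⁻¹' {v | rank v i₀ < k} := by
    ext ω
    simp only [Set.mem_ofPred_eq, Set.mem_preimage]
    rw [show (fun j => X (Equiv.swap i₀ i j) ω) = (fun j => X j ω) ∘ Equiv.swap i₀ i from rfl,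
      rank_comp_perm, Equiv.swap_apply_left]
  rw [hperm, ← Measure.map_apply (measurable_pi_lambda _ fun j => hX _) hB, hexch,
    Measure.map_apply (measurable_pi_lambda _ hX) hB]
  rfl

theorem Exchangeable.card_mul_measure_rank_lt_le {μ : Measure Ω} [IsProbabilityMeasure μ]
    {X : ι → Ω → α} (hX : ∀ i, Measurable (X i)) (hexch : Exchangeable μ X) (i₀ : ι) (k : ℕ) :
    Fintype.card ι * μ {ω | rank (fun j => X j ω) i₀ < k} ≤ k := by
  classical
  have hA : ∀ i, MeasurableSet {ω | rank (fun j => X j ω) i < k} := fun i =>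
    (measurable_rank i).comp (measurable_pi_lambda _ hX) measurableSet_Iio
  calc Fintype.card ι * μ {ω | rank (fun j => X j ω) i₀ < k}
      = ∑ i, μ {ω | rank (fun j => X j ω) i < k} := by
        simp [hexch.measure_rank_lt_eq hX _ i₀]
    _ ≤ k * μ Set.univ :=
        sum_measure_le_of_forall_card_le (fun i _ => hA i) fun ω => by
          simpa only [Set.mem_ofPred_eq] using card_filter_rank_lt_le (fun j => X j ω) k
    _ = k := by simp

theorem Exchangeable.measure_rank_lt_floor_le [Nonempty ι] {μ : Measure Ω}
    [IsProbabilityMeasure μ] {X : ι → Ω → α} (hX : ∀ i, Measurable (X i))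
    (hexch : Exchangeable μ X) (i₀ : ι) {a : ℝ} (ha : 0 ≤ a) :
    μ {ω | rank (fun j => X j ω) i₀ < ⌊(Fintype.card ι : ℝ) * a⌋₊} ≤ ENNReal.ofReal a := by
  have hk : (⌊(Fintype.card ι : ℝ) * a⌋₊ : ℝ≥0∞) ≤ Fintype.card ι * ENNReal.ofReal a := by
    rw [← ENNReal.ofReal_natCast, ← ENNReal.ofReal_natCast (Fintype.card ι),
      ← ENNReal.ofReal_mul (by positivity)]
    exact ENNReal.ofReal_le_ofReal (Nat.floor_le (by positivity))
  exact (ENNReal.mul_le_mul_iff_right (by simp) (by simp)).1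
    ((hexch.card_mul_measure_rank_lt_le hX i₀ _).trans hk)

end Rank

theorem stmt0_general {Ω : Type*} [MeasurableSpace Ω] (μ : Measure Ω) [IsProbabilityMeasure μ]
    (n : ℕ) (Y : Fin (n + 1) → Ω → ℝ) (hmeas : ∀ i, Measurable (Y i))
    (hexch : ∀ e : Equiv.Perm (Fin (n + 1)),
      Measure.map (fun ω i => Y (e i) ω) μ = Measure.map (fun ω i => Y i ω) μ)
    (α : ℝ) (hα : 0 < α) :
    ENNReal.ofReal (1 - α) ≤
      μ {ω | (⌊((n : ℝ) + 1) * α⌋ : ℝ) / ((n : ℝ) + 1) ≤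
        (1 / ((n : ℝ) + 1)) *
          ∑ j : Fin (n + 1), if Y j ω ≤ Y (Fin.last n) ω then (1 : ℝ) else 0} := by
  set bad := {ω | rank (fun j => Y j ω) (Fin.last n) < ⌊((n : ℝ) + 1) * α⌋₊}
  have hevent : {ω | (⌊((n : ℝ) + 1) * α⌋ : ℝ) / ((n : ℝ) + 1) ≤
      (1 / ((n : ℝ) + 1)) *
        ∑ j : Fin (n + 1), if Y j ω ≤ Y (Fin.last n) ω then (1 : ℝ) else 0} = badᶜ := by
    ext ω
    simp only [Set.mem_ofPred_eq, Set.mem_compl_iff, bad, not_lt]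
    rw [← natCast_floor_eq_intCast_floor (by positivity), ← natCast_card_filter,
      one_div_mul_eq_div, div_le_div_iff_of_pos_right (by positivity), Nat.cast_le]
    rfl
  have hbad : μ bad ≤ ENNReal.ofReal α := by
    simpa [bad] using Exchangeable.measure_rank_lt_floor_le hmeas hexch (Fin.last n) hα.le
  have hbad_meas : MeasurableSet bad :=
    (measurable_rank _).comp (measurable_pi_lambda _ hmeas) measurableSet_Iio
  rw [hevent, prob_compl_eq_one_sub hbad_meas, ENNReal.ofReal_sub _ hα.le, ENNReal.ofReal_one]
  exact tsub_le_tsub_left hbad 1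

/-- Finite-sample validity rank lemma for conformal prediction:
for exchangeable continuous random variables `Y 0, ..., Y n` (the last one
playing the role of `Y_{n+1}`), the conformity rank
`π = (n+1)⁻¹ Σ_j 1{Y j ≤ Y (last)}` satisfies
`P(π ≥ ⌊(n+1)α⌋/(n+1)) ≥ 1 - α`. -/
theorem stmt0 {Ω : Type*} [MeasurableSpace Ω] (μ : Measure Ω) [IsProbabilityMeasure μ]
    (n : ℕ) (Y : Fin (n + 1) → Ω → ℝ) (hmeas : ∀ i, Measurable (Y i))
    (hexch : ∀ e : Equiv.Perm (Fin (n + 1)),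
      Measure.map (fun ω i => Y (e i) ω) μ = Measure.map (fun ω i => Y i ω) μ)
    (hties : ∀ i j, i ≠ j → μ {ω | Y i ω = Y j ω} = 0)
    (α : ℝ) (hα : 0 < α) (hα1 : α < 1) :
    ENNReal.ofReal (1 - α) ≤
      μ {ω | (⌊((n : ℝ) + 1) * α⌋ : ℝ) / ((n : ℝ) + 1) ≤
        (1 / ((n : ℝ) + 1)) *
          ∑ j : Fin (n + 1), if Y j ω ≤ Y (Fin.last n) ω then (1 : ℝ) else 0} :=
  stmt0_general μ n Y hmeas hexch α hα
end

section
/- Let p : ℝ → [0, ∞) be a continuous, strictly unimodal probability density (strictly increasing to the left of its mode and strictly decreasing to the right), with mode m, and fix α ∈ (0,1). Then there exists a unique pair (a, b) with a < m < b minimizing b - a subject to ∫_a^b p(u) du = 1 - α, and this minimizer satisfies p(a) = p(b). -/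
/-!
For every level `t ∈ (0, p m)` the superlevel set `{u | t ≤ p u}` is an interval `[a t, b t]`
around the mode, and the two endpoints, being inverse branches of `p`, depend continuously on `t`.
Hence so does the mass of `[a t, b t]`, which comes close to `1` for small `t` and to `0` for `t`
near `p m`; the intermediate value theorem gives a level whose interval has mass exactly `1 - α`.
Such an interval `[A, B]` at level `t` is shortest among intervals of its mass, because
`p - t` is nonnegative on `[A, B]` and nonpositive off it, so `∫ₓʸ (p - t) ≤ ∫_A^B (p - t)`.
Two superlevel intervals are nested, so if they carry the same mass they coincide, as `p > 0`.
-/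

open MeasureTheory intervalIntegral Set Filter Topology Function

theorem StrictMonoOn.continuousOn_invFunOn {α β : Type*} [LinearOrder α] [TopologicalSpace α]
    [OrderTopology α] [DenselyOrdered α] [Nonempty α] [LinearOrder β] [TopologicalSpace β]
    [OrderTopology β] {f : α → β} {s : Set α} (hf : StrictMonoOn f s) (hs : IsOpen s) :
    ContinuousOn (invFunOn f s) (interior (f '' s)) := by
  have hleft : LeftInvOn (invFunOn f s) f s := hf.injOn.leftInvOn_invFunOn
  have hmono : StrictMonoOn (invFunOn f s) (f '' s) := by
    rintro _ ⟨x, hx, rfl⟩ _ ⟨y, hy, rfl⟩ hxy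
    rw [hleft hx, hleft hy]
    exact (hf.lt_iff_lt hx hy).1 hxy
  intro y hy
  have himage : invFunOn f s '' (f '' s) ∈ 𝓝 (invFunOn f s y) := by
    rw [hf.injOn.invFunOn_image subset_rfl]
    exact hs.mem_nhds (invFunOn_mem (show y ∈ f '' s from interior_subset hy))
  exact (hmono.continuousAt_of_image_mem_nhds (mem_interior_iff_mem_nhds.1 hy)
    himage).continuousWithinAt

theorem MeasureTheory.IntegrableOn.exists_lt {α : Type*} [MeasurableSpace α] {μ : Measure α}
    {f : α → ℝ} {s : Set α} (hf : IntegrableOn f s μ) (hs : MeasurableSet s) (hμs : μ s = ⊤)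
    {t : ℝ} (ht : 0 < t) : ∃ x ∈ s, f x < t := by
  by_contra! h
  have hconst : IntegrableOn (fun _ => t) s μ := by
    refine hf.mono' aestronglyMeasurable_const ?_
    filter_upwards [ae_restrict_mem hs] with x hx
    rw [Real.norm_eq_abs, abs_of_pos ht]
    exact h x hx
  rw [integrableOn_const_iff, hμs] at hconst
  simp [ht.ne'] at hconst

theorem Continuous.continuousOn_intervalIntegral {α E : Type*} [TopologicalSpace α]
    [NormedAddCommGroup E] [NormedSpace ℝ E] {f : ℝ → E} (hf : Continuous f) {a b : α → ℝ}
    {s : Set α} (ha : ContinuousOn a s) (hb : ContinuousOn b s) :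
    ContinuousOn (fun x => ∫ u in a x..b x, f u) s := by
  have hprim := continuous_primitive (μ := volume) (fun x y => hf.intervalIntegrable x y) 0
  refine ((hprim.comp_continuousOn hb).sub (hprim.comp_continuousOn ha)).congr fun x _ => ?_
  exact (integral_interval_sub_left (hf.intervalIntegrable _ _) (hf.intervalIntegrable _ _)).symm

theorem exists_intervalIntegral_lt {f : ℝ → ℝ} (hf : Continuous f) (m : ℝ) {r : ℝ} (hr : 0 < r) :
    ∃ c d, c < m ∧ m < d ∧ ∫ u in c..d, f u < r := by
  have hφ : Continuous fun δ : ℝ => ∫ u in m - δ..m + δ, f u :=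
    continuousOn_univ.1 (hf.continuousOn_intervalIntegral (s := univ) (by fun_prop) (by fun_prop))
  have hsmall : ∀ᶠ δ in 𝓝[>] 0, ∫ u in m - δ..m + δ, f u < r :=
    nhdsWithin_le_nhds ((hφ.tendsto 0).eventually (gt_mem_nhds (by simpa using hr)))
  obtain ⟨δ, hδ, hδ0⟩ := (hsmall.and self_mem_nhdsWithin).exists
  exact ⟨m - δ, m + δ, by linarith, by linarith, hδ⟩

theorem exists_lt_intervalIntegral {f : ℝ → ℝ} (hf : Integrable f) (m : ℝ) {r : ℝ}
    (hr : r < ∫ u, f u) : ∃ c d, c < m ∧ m < d ∧ r < ∫ u in c..d, f u := by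
  have hlim : Tendsto (fun δ => ∫ u in m - δ..m + δ, f u) atTop (𝓝 (∫ u, f u)) :=
    intervalIntegral_tendsto_integral hf
      (tendsto_atBot_add_const_left atTop m tendsto_neg_atTop_atBot)
      (tendsto_atTop_add_const_left atTop m tendsto_id)
  obtain ⟨δ, hδ, hδ0⟩ := ((hlim.eventually (lt_mem_nhds hr)).and (eventually_gt_atTop 0)).exists
  exact ⟨m - δ, m + δ, by linarith, by linarith, hδ⟩

theorem intervalIntegral_sub_mul_le_of_superlevel {f : ℝ → ℝ} (hf : Continuous f) {t A B x y : ℝ}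
    (hAB : A ≤ B) (hxy : x ≤ y) (hin : ∀ u ∈ Icc A B, t ≤ f u) (hout : ∀ u ∉ Icc A B, f u ≤ t) :
    (∫ u in x..y, f u) - t * (y - x) ≤ (∫ u in A..B, f u) - t * (B - A) := by
  set g := fun u => f u - t
  have hg : Continuous g := hf.sub continuous_const
  have hint : ∀ a b, (∫ u in a..b, g u) = (∫ u in a..b, f u) - t * (b - a) := fun a b => by
    rw [integral_sub (hf.intervalIntegrable a b) intervalIntegrable_const,
      intervalIntegral.integral_const, smul_eq_mul, mul_comm]
  rw [← hint, ← hint, integral_of_le hxy, integral_of_le hAB]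
  have hmeas : MeasurableSet (Icc A B) := measurableSet_Icc
  have hout' : ∫ u in Ioc x y \ Icc A B, g u ≤ 0 :=
    setIntegral_nonpos (measurableSet_Ioc.diff hmeas) fun u hu => sub_nonpos.2 (hout u hu.2)
  calc ∫ u in Ioc x y, g u
      = (∫ u in Ioc x y ∩ Icc A B, g u) + ∫ u in Ioc x y \ Icc A B, g u :=
        (integral_inter_add_sdiff hmeas hg.integrableOn_Ioc).symm
    _ ≤ ∫ u in Ioc x y ∩ Icc A B, g u := by linarith
    _ ≤ ∫ u in Icc A B, g u := by
        refine setIntegral_mono_set hg.integrableOn_Icc ?_ inter_subset_right.eventuallyLE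
        filter_upwards [ae_restrict_mem hmeas] with u hu
        exact sub_nonneg.2 (hin u hu)
    _ = ∫ u in Ioc A B, g u := integral_Icc_eq_integral_Ioc

theorem intervalIntegral_le_of_Icc_subset {f : ℝ → ℝ} (hf : Continuous f) (hf₀ : ∀ x, 0 ≤ f x)
    {c d A B : ℝ} (hcd : c ≤ d) (h : Icc c d ⊆ Icc A B) : ∫ u in c..d, f u ≤ ∫ u in A..B, f u :=
  have hAB := (Icc_subset_Icc_iff hcd).1 h
  integral_mono_interval hAB.1 hcd hAB.2 (Eventually.of_forall hf₀) (hf.intervalIntegrable _ _)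

theorem eq_of_Icc_subset_of_intervalIntegral_eq {f : ℝ → ℝ} (hf : Continuous f)
    (hpos : ∀ x, 0 < f x) {A B x y : ℝ} (hAB : A ≤ B) (h : Icc A B ⊆ Icc x y)
    (heq : ∫ u in x..y, f u = ∫ u in A..B, f u) : x = A ∧ B = y := by
  obtain ⟨hxA, hBy⟩ := (Icc_subset_Icc_iff hAB).1 h
  have hsplit : ∫ u in x..y, f u = (∫ u in x..A, f u) + (∫ u in A..B, f u) + ∫ u in B..y, f u := by
    rw [integral_add_adjacent_intervals (hf.intervalIntegrable _ _) (hf.intervalIntegrable _ _),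
      integral_add_adjacent_intervals (hf.intervalIntegrable _ _) (hf.intervalIntegrable _ _)]
  have hleft := integral_nonneg (μ := volume) hxA fun u _ => (hpos u).le
  have hright := integral_nonneg (μ := volume) hBy fun u _ => (hpos u).le
  constructor
  · by_contra hne
    have := intervalIntegral_pos_of_pos_on (hf.intervalIntegrable _ _) (fun u _ => hpos u)
      (lt_of_le_of_ne hxA hne)
    linarith
  · by_contra hne
    have := intervalIntegral_pos_of_pos_on (hf.intervalIntegrable _ _) (fun u _ => hpos u)
      (lt_of_le_of_ne hBy hne)
    linarith

section Unimodal

variable {p : ℝ → ℝ} {m : ℝ}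

theorem pos_of_strictMonoOn_of_strictAntiOn (hpos : ∀ x, 0 ≤ p x)
    (hmono : StrictMonoOn p (Iic m)) (hanti : StrictAntiOn p (Ici m)) (x : ℝ) : 0 < p x := by
  rcases le_total x m with hx | hx
  · exact (hpos (x - 1)).trans_lt (hmono (by simp only [mem_Iic]; linarith) hx (by linarith))
  · exact (hpos (x + 1)).trans_lt (hanti hx (by simp only [mem_Ici]; linarith) (by linarith))

theorem Icc_subset_Icc_of_unimodal (hmono : StrictMonoOn p (Iic m))
    (hanti : StrictAntiOn p (Ici m)) {A B c d : ℝ} (hc : c ≤ m) (hd : m ≤ d) (hA : A ≤ m)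
    (hB : m ≤ B) (hcA : p c ≤ p A) (hdB : p d ≤ p B) : Icc A B ⊆ Icc c d :=
  Icc_subset_Icc ((hmono.le_iff_le hc hA).1 hcA) ((hanti.le_iff_ge hd hB).1 hdB)

theorem setOf_le_eq_Icc_of_unimodal (hmono : StrictMonoOn p (Iic m))
    (hanti : StrictAntiOn p (Ici m)) {A B : ℝ} (hA : A ≤ m) (hB : m ≤ B) (hAB : p A = p B) :
    {u | p A ≤ p u} = Icc A B := by
  ext u
  rw [mem_ofPred_eq]
  rcases le_total u m with hu | hu
  · rw [hmono.le_iff_le hA hu]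
    exact ⟨fun h => ⟨h, hu.trans hB⟩, And.left⟩
  · rw [hAB, hanti.le_iff_ge hB hu]
    exact ⟨fun h => ⟨hA.trans hu, h⟩, And.right⟩

theorem exists_continuousOn_rightInverse_Iio (hcont : Continuous p)
    (hmono : StrictMonoOn p (Iic m)) (hpos : ∀ x, 0 < p x) (hsmall : ∀ t > 0, ∃ x < m, p x < t) :
    ∃ a : ℝ → ℝ, ContinuousOn a (Ioo 0 (p m)) ∧ ∀ t ∈ Ioo 0 (p m), a t < m ∧ p (a t) = t := by
  have himage : p '' Iio m = Ioo 0 (p m) := by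
    refine Subset.antisymm
      (image_subset_iff.2 fun x hx => ⟨hpos x, hmono (le_of_lt hx : x ≤ m) self_mem_Iic hx⟩) ?_
    rintro t ⟨ht₀, htm⟩
    obtain ⟨x₀, hx₀, hpx₀⟩ := hsmall t ht₀
    obtain ⟨x, hx, rfl⟩ := intermediate_value_Ioo hx₀.le hcont.continuousOn ⟨hpx₀, htm⟩
    exact ⟨x, hx.2, rfl⟩
  refine ⟨invFunOn p (Iio m), ?_, fun t ht => invFunOn_pos (himage ▸ ht)⟩
  simpa [himage] using (hmono.mono Iio_subset_Iic_self).continuousOn_invFunOn isOpen_Iio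

theorem exists_continuousOn_rightInverse_Ioi (hcont : Continuous p)
    (hanti : StrictAntiOn p (Ici m)) (hpos : ∀ x, 0 < p x) (hsmall : ∀ t > 0, ∃ x > m, p x < t) :
    ∃ b : ℝ → ℝ, ContinuousOn b (Ioo 0 (p m)) ∧ ∀ t ∈ Ioo 0 (p m), m < b t ∧ p (b t) = t := by
  set q := fun x => p (2 * m - x)
  have hqm : q m = p m := by simp only [q]; ring_nf
  have hqmono : StrictMonoOn q (Iic m) := fun x hx y hy hxy =>
    hanti (by simp only [mem_Ici]; linarith [mem_Iic.1 hy])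
      (by simp only [mem_Ici]; linarith [mem_Iic.1 hx]) (by linarith)
  obtain ⟨a, hac, ha⟩ := exists_continuousOn_rightInverse_Iio (p := q)
    (hcont.comp (by fun_prop)) hqmono (fun x => hpos _) fun t ht =>
      let ⟨x, hx, hpx⟩ := hsmall t ht
      ⟨2 * m - x, by linarith, by simpa [q] using hpx⟩
  rw [hqm] at hac ha
  exact ⟨fun t => 2 * m - a t, continuousOn_const.sub hac,
    fun t ht => ⟨by linarith [(ha t ht).1], (ha t ht).2⟩⟩

theorem exists_level_interval_intervalIntegral_eq (hcont : Continuous p)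
    (hmono : StrictMonoOn p (Iic m)) (hanti : StrictAntiOn p (Ici m)) (hpos : ∀ x, 0 < p x)
    (hint : Integrable p) {r : ℝ} (hr₀ : 0 < r) (hr : r < ∫ x, p x) :
    ∃ A B, A < m ∧ m < B ∧ p A = p B ∧ ∫ u in A..B, p u = r := by
  obtain ⟨a, hac, ha⟩ := exists_continuousOn_rightInverse_Iio hcont hmono hpos fun t ht =>
    hint.integrableOn.exists_lt measurableSet_Iio Real.volume_Iio ht
  obtain ⟨b, hbc, hb⟩ := exists_continuousOn_rightInverse_Ioi hcont hanti hpos fun t ht =>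
    hint.integrableOn.exists_lt measurableSet_Ioi Real.volume_Ioi ht
  have hp₀ : ∀ x, 0 ≤ p x := fun x => (hpos x).le
  obtain ⟨c, d, hc, hd, hcd⟩ := exists_lt_intervalIntegral hint m hr
  obtain ⟨c', d', hc', hd', hcd'⟩ := exists_intervalIntegral_lt hcont m hr₀
  have ht₁ : min (p c) (p d) ∈ Ioo 0 (p m) :=
    ⟨lt_min (hpos c) (hpos d), min_lt_of_left_lt (hmono hc.le self_mem_Iic hc)⟩
  have ht₂ : max (p c') (p d') ∈ Ioo 0 (p m) :=
    ⟨lt_max_of_lt_left (hpos c'),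
      max_lt (hmono hc'.le self_mem_Iic hc') (hanti self_mem_Ici hd'.le hd')⟩
  have hF₁ : r ≤ ∫ u in a (min (p c) (p d))..b (min (p c) (p d)), p u := by
    obtain ⟨ha₁, hpa₁⟩ := ha _ ht₁
    obtain ⟨hb₁, hpb₁⟩ := hb _ ht₁
    refine hcd.le.trans (intervalIntegral_le_of_Icc_subset hcont hp₀ (hc.trans hd).le ?_)
    exact Icc_subset_Icc_of_unimodal hmono hanti ha₁.le hb₁.le hc.le hd.le
      (hpa₁.trans_le (min_le_left _ _)) (hpb₁.trans_le (min_le_right _ _))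
  have hF₂ : ∫ u in a (max (p c') (p d'))..b (max (p c') (p d')), p u ≤ r := by
    obtain ⟨ha₂, hpa₂⟩ := ha _ ht₂
    obtain ⟨hb₂, hpb₂⟩ := hb _ ht₂
    refine (intervalIntegral_le_of_Icc_subset hcont hp₀ (ha₂.trans hb₂).le ?_).trans hcd'.le
    exact Icc_subset_Icc_of_unimodal hmono hanti hc'.le hd'.le ha₂.le hb₂.le
      ((le_max_left _ _).trans_eq hpa₂.symm) ((le_max_right _ _).trans_eq hpb₂.symm)
  have hlevels := ordConnected_Ioo.uIcc_subset ht₁ ht₂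
  obtain ⟨t, ht, hmass⟩ := intermediate_value_uIcc
    ((hcont.continuousOn_intervalIntegral hac hbc).mono hlevels) (mem_uIcc.2 (Or.inr ⟨hF₂, hF₁⟩))
  obtain ⟨hat, hpat⟩ := ha t (hlevels ht)
  obtain ⟨hbt, hpbt⟩ := hb t (hlevels ht)
  exact ⟨a t, b t, hat, hbt, hpat.trans hpbt.symm, hmass⟩

theorem sub_le_sub_of_level (hcont : Continuous p) (hmono : StrictMonoOn p (Iic m))
    (hanti : StrictAntiOn p (Ici m)) {A B x y : ℝ} (hA : A ≤ m) (hB : m ≤ B) (hAB : p A = p B)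
    (hpA : 0 < p A) (hxy : x ≤ y) (h : ∫ u in x..y, p u = ∫ u in A..B, p u) : B - A ≤ y - x := by
  have hlevel := setOf_le_eq_Icc_of_unimodal hmono hanti hA hB hAB
  have key := intervalIntegral_sub_mul_le_of_superlevel hcont (hA.trans hB) hxy hlevel.symm.subset
    fun u hu => le_of_not_ge fun h => hu (hlevel.subset h)
  rw [h] at key
  exact le_of_mul_le_mul_left (by linarith) hpA

theorem eq_of_level_of_intervalIntegral_eq (hcont : Continuous p) (hmono : StrictMonoOn p (Iic m))
    (hanti : StrictAntiOn p (Ici m)) (hpos : ∀ x, 0 < p x) {A B x y : ℝ} (hA : A ≤ m) (hB : m ≤ B)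
    (hAB : p A = p B) (hx : x ≤ m) (hy : m ≤ y) (hxy : p x = p y)
    (h : ∫ u in x..y, p u = ∫ u in A..B, p u) : x = A ∧ y = B := by
  rcases le_total (p x) (p A) with hle | hle
  · obtain ⟨h₁, h₂⟩ := eq_of_Icc_subset_of_intervalIntegral_eq hcont hpos (hA.trans hB)
      (Icc_subset_Icc_of_unimodal hmono hanti hx hy hA hB hle (by rwa [← hxy, ← hAB])) h
    exact ⟨h₁, h₂.symm⟩
  · obtain ⟨h₁, h₂⟩ := eq_of_Icc_subset_of_intervalIntegral_eq hcont hpos (hx.trans hy)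
      (Icc_subset_Icc_of_unimodal hmono hanti hA hB hx hy hle (by rwa [← hxy, ← hAB])) h.symm
    exact ⟨h₁.symm, h₂⟩

end Unimodal

/-- The highest-density interval of a continuous strictly unimodal density:
there is a unique pair `(a, b)` with `a < m < b`, probability mass `1 - α`,
of minimal length among all such intervals, and it has equal density at its
endpoints: `p(a) = p(b)`. -/
theorem stmt14 (p : ℝ → ℝ) (m : ℝ) (hcont : Continuous p) (hpos : ∀ y, 0 ≤ p y)
    (hmono : StrictMonoOn p (Set.Iic m)) (hanti : StrictAntiOn p (Set.Ici m))
    (hint : ∫ y : ℝ, p y = 1) (α : ℝ) (hα : 0 < α) (hα1 : α < 1) :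
    ∃! q : ℝ × ℝ, q.1 < m ∧ m < q.2 ∧ (∫ u in q.1..q.2, p u) = 1 - α ∧
      (∀ a b : ℝ, a < b → (∫ u in a..b, p u) = 1 - α → q.2 - q.1 ≤ b - a) ∧
      p q.1 = p q.2 := by
  have hp := pos_of_strictMonoOn_of_strictAntiOn hpos hmono hanti
  have hintegrable : Integrable p := .of_integral_ne_zero (by rw [hint]; exact one_ne_zero)
  obtain ⟨A, B, hA, hB, hAB, hmass⟩ := exists_level_interval_intervalIntegral_eq hcont hmono hanti
    hp hintegrable (r := 1 - α) (by linarith) (by linarith)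
  refine ⟨(A, B), ⟨hA, hB, hmass, fun x y hxy hxy' => ?_, hAB⟩, ?_⟩
  · exact sub_le_sub_of_level hcont hmono hanti hA.le hB.le hAB (hp A) hxy.le
      (hxy'.trans hmass.symm)
  · rintro ⟨x, y⟩ ⟨hx, hy, hxy, -, hpxy⟩
    obtain ⟨rfl, rfl⟩ := eq_of_level_of_intervalIntegral_eq hcont hmono hanti hp hA.le hB.le hAB
      hx.le hy.le hpxy (hxy.trans hmass.symm)
    rfl
end
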